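/- arXiv:2510.05345 — 4 statements merged into one kernel-verified Lean document; each statement's English description precedes it below -/
import Mathlib

section
/- Let α > 0, κ ∈ ℤ. Suppose Φ^ψ, Φ^u : ℂ → ℂ are complex rational functions satisfying, for all s in their common domain, (s + ακ²)·Φ^ψ(s) - Φ^u(s) = 1, and suppose both are proper with no poles in the closed right half-plane and vanish at infinity (strictly proper stable rational functions). Then there exists a strictly proper stable rational function ρ with Φ^ψ(s) = (1/(s+1))·(1 + ρ(s)) and Φ^u(s) = (ακ² - 1)/(s+1) + ((s + ακ²)/(s+1))·ρ(s). -/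
open Polynomial

/-- A rational function is strictly proper and stable (an element of RH₂) if the degree
of its numerator is less than that of its denominator (it vanishes at infinity) and its
denominator has no roots in the closed right half-plane (no unstable poles). -/
def StrictlyProperStable (f : RatFunc ℂ) : Prop :=
  f.num.degree < f.denom.degree ∧ ∀ z : ℂ, 0 ≤ z.re → f.denom.eval z ≠ 0

lemma sps_deg_iff (f : RatFunc ℂ) (hf : f ≠ 0) :
    f.num.degree < f.denom.degree ↔ f.intDegree < 0 := by
  rw [RatFunc.intDegree, sub_neg,
    Polynomial.degree_eq_natDegree (RatFunc.num_ne_zero hf),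
    Polynomial.degree_eq_natDegree f.denom_ne_zero]
  exact_mod_cast Iff.rfl

lemma sps_zero : StrictlyProperStable (0 : RatFunc ℂ) := by
  constructor
  · simp [RatFunc.num_zero, RatFunc.denom_zero]
  · simp [RatFunc.denom_zero]

lemma sps_C_mul (a : ℂ) (f : RatFunc ℂ) (hf : StrictlyProperStable f) :
    StrictlyProperStable (RatFunc.C a * f) := by
  rcases eq_or_ne a 0 with rfl | ha
  · simpa using sps_zero
  rcases eq_or_ne f 0 with rfl | hf0
  · simpa using sps_zero
  have hne : RatFunc.C a * f ≠ 0 :=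
    mul_ne_zero (by simpa using ha) hf0
  constructor
  · rw [sps_deg_iff _ hne, RatFunc.intDegree_mul (by simpa using ha) hf0,
      RatFunc.intDegree_C, zero_add]
    exact (sps_deg_iff f hf0).mp hf.1
  · intro z hz hzero
    have hdvd : (RatFunc.C a * f).denom ∣ (RatFunc.C a).denom * f.denom :=
      RatFunc.denom_mul_dvd _ _
    rw [RatFunc.denom_C, one_mul] at hdvd
    exact hf.2 z hz (Polynomial.eval_eq_zero_of_dvd_of_eval_eq_zero hdvd hzero)

lemma sps_add (f g : RatFunc ℂ) (hf : StrictlyProperStable f)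
    (hg : StrictlyProperStable g) : StrictlyProperStable (f + g) := by
  rcases eq_or_ne f 0 with rfl | hf0
  · simpa using hg
  rcases eq_or_ne g 0 with rfl | hg0
  · simpa using hf
  rcases eq_or_ne (f + g) 0 with h0 | hne
  · rw [h0]; exact sps_zero
  constructor
  · rw [sps_deg_iff _ hne]
    calc (f + g).intDegree ≤ max f.intDegree g.intDegree :=
          RatFunc.intDegree_add_le hg0 hne
      _ < 0 := max_lt ((sps_deg_iff f hf0).mp hf.1) ((sps_deg_iff g hg0).mp hg.1)
  · intro z hz hzero
    have hdvd := RatFunc.denom_add_dvd f g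
    have := Polynomial.eval_eq_zero_of_dvd_of_eval_eq_zero hdvd hzero
    rw [Polynomial.eval_mul, mul_eq_zero] at this
    rcases this with h | h
    · exact hf.2 z hz h
    · exact hg.2 z hz h

/-- Explicit parameterization of the affine constraint: if Φ^ψ, Φ^u are strictly proper
stable rational functions satisfying (s + ακ²)·Φ^ψ(s) - Φ^u(s) = 1, then there is a
strictly proper stable rational ρ with Φ^ψ = (1/(s+1))(1 + ρ) and
Φ^u = (ακ²-1)/(s+1) + ((s+ακ²)/(s+1))·ρ. -/
theorem explicit_parameterization_of_affine_constraint
    (α : ℝ) (hα : 0 < α) (κ : ℤ) (Φψ Φu : RatFunc ℂ)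
    (hcon : (RatFunc.X + RatFunc.C ((α : ℂ) * (κ : ℂ)^2)) * Φψ - Φu = 1)
    (hψ : StrictlyProperStable Φψ) (hu : StrictlyProperStable Φu) :
    ∃ ρ : RatFunc ℂ, StrictlyProperStable ρ ∧
      Φψ = (1 / (RatFunc.X + 1)) * (1 + ρ) ∧
      Φu = RatFunc.C ((α : ℂ) * (κ : ℂ)^2 - 1) / (RatFunc.X + 1)
            + ((RatFunc.X + RatFunc.C ((α : ℂ) * (κ : ℂ)^2)) / (RatFunc.X + 1)) * ρ := by
  set c : ℂ := (α : ℂ) * (κ : ℂ)^2 with hc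
  refine ⟨Φu + RatFunc.C (1 - c) * Φψ, sps_add _ _ hu (sps_C_mul _ _ hψ), ?_, ?_⟩
  all_goals {
    have hX1 : (RatFunc.X + 1 : RatFunc ℂ) ≠ 0 := by
      have he : (RatFunc.X + 1 : RatFunc ℂ)
          = algebraMap (Polynomial ℂ) _ (Polynomial.X + 1) := by
        simp [RatFunc.algebraMap_X]
      rw [he]
      refine RatFunc.algebraMap_ne_zero ?_
      intro h
      have := congrArg (Polynomial.eval 0) h
      simp at this
    have h1 : Φu = (RatFunc.X + RatFunc.C c) * Φψ - 1 := by linear_combination -hcon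
    field_simp [h1]
    simp only [h1, map_sub, map_one, map_add, map_neg]
    ring
  }
end

section
/- Let E and T be square-integrable functions on the imaginary axis with E ∈ H₂ of the right half-plane and F a rational inner function (|F(iω)| = 1 for all real ω), such that s ↦ conj(F(iω))·E(iω) has vanishing projection onto H₂ (i.e., F~E ∈ H₂^⊥). Then for every T ∈ H₂, ‖E - F·T‖²_{L²(iℝ)} = ‖E‖²_{L²(iℝ)} + ‖T‖²_{L²(iℝ)}. -/
open MeasureTheory

/-- Kučera's orthogonality lemma on the boundary L²(iℝ) (parameterized by ω ↦ iω):
if E belongs to (the boundary-value space of) H₂, F is inner (|F(iω)| = 1 for all ω),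
and F~E ∈ H₂^⊥ (the para-Hermitian conjugate of F times E is orthogonal to every
element of H₂), then for every T ∈ H₂,
‖E - F·T‖² = ‖E‖² + ‖T‖² in the L²(iℝ) norm (1/2π)∫|·|²dω. -/
theorem kucera_orthogonality_lemma
    (H2 : (ℝ → ℂ) → Prop)    -- boundary-value subspace of H₂ of the right half-plane
    (hH2meas : ∀ T, H2 T → AEStronglyMeasurable T volume)
    (hH2sq : ∀ T, H2 T → Integrable (fun ω => ‖T ω‖^2))
    (E F : ℝ → ℂ)
    (hE : H2 E)
    (hFinner : ∀ ω : ℝ, ‖F ω‖ = 1)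
    (hFmeas : AEStronglyMeasurable F volume)
    (horth : ∀ T, H2 T →
      ∫ ω : ℝ, F ω * (starRingEnd ℂ) (E ω) * T ω = 0)  -- F~E ∈ H₂^⊥
    (T : ℝ → ℂ) (hT : H2 T) :
    (1 / (2 * Real.pi)) * ∫ ω : ℝ, ‖E ω - F ω * T ω‖^2
      = (1 / (2 * Real.pi)) * (∫ ω : ℝ, ‖E ω‖^2)
        + (1 / (2 * Real.pi)) * (∫ ω : ℝ, ‖T ω‖^2) := by
  have hEm := hH2meas E hE
  have hTm := hH2meas T hT
  have hE2 := hH2sq E hE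
  have hT2 := hH2sq T hT
  set c : ℝ → ℂ := fun ω => F ω * (starRingEnd ℂ) (E ω) * T ω with hc
  have hcm : AEStronglyMeasurable c volume :=
    (hFmeas.mul (Complex.continuous_conj.comp_aestronglyMeasurable hEm)).mul hTm
  have hadd : Integrable (fun ω => ‖E ω‖^2 + ‖T ω‖^2) := hE2.add hT2
  have hcI : Integrable c := by
    refine (hadd.div_const 2).mono hcm ?_
    filter_upwards with ω
    have h1 : ‖c ω‖ = ‖E ω‖ * ‖T ω‖ := by
      simp [hc, norm_mul, hFinner ω]
    have h2 : ‖E ω‖ * ‖T ω‖ ≤ (‖E ω‖^2 + ‖T ω‖^2) / 2 := by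
      nlinarith [sq_nonneg (‖E ω‖ - ‖T ω‖)]
    rw [h1, Real.norm_eq_abs, abs_of_nonneg (by positivity)]
    exact h2
  have key : ∀ ω : ℝ, (‖E ω - F ω * T ω‖^2 : ℝ)
      = ‖E ω‖^2 + ‖T ω‖^2 - 2 * (c ω).re := by
    intro ω
    have h1 : (‖E ω - F ω * T ω‖^2 : ℝ) = Complex.normSq (E ω - F ω * T ω) := by
      rw [← Complex.sq_norm]
    rw [h1, Complex.normSq_sub]
    have h2 : Complex.normSq (F ω * T ω) = ‖T ω‖^2 := by
      rw [Complex.normSq_mul, Complex.normSq_eq_norm_sq, Complex.normSq_eq_norm_sq,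
        hFinner ω, one_pow, one_mul]
    have h3 : Complex.normSq (E ω) = ‖E ω‖^2 := by
      rw [← Complex.sq_norm]
    have h4 : (E ω * (starRingEnd ℂ) (F ω * T ω)).re = (c ω).re := by
      have : E ω * (starRingEnd ℂ) (F ω * T ω) = (starRingEnd ℂ) (c ω) := by
        simp only [hc, map_mul, Complex.conj_conj]; ring
      rw [this, Complex.conj_re]
    rw [h2, h3, h4]
  have hcr : Integrable (fun ω => (c ω).re) := hcI.re
  have hsplit : ∫ ω : ℝ, ‖E ω - F ω * T ω‖^2
      = (∫ ω : ℝ, ‖E ω‖^2) + (∫ ω : ℝ, ‖T ω‖^2) - 2 * ∫ ω : ℝ, (c ω).re := by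
    calc ∫ ω : ℝ, ‖E ω - F ω * T ω‖^2
        = ∫ ω : ℝ, (‖E ω‖^2 + ‖T ω‖^2 - 2 * (c ω).re) := by
          exact integral_congr_ae (Filter.Eventually.of_forall key)
      _ = (∫ ω : ℝ, ‖E ω‖^2) + (∫ ω : ℝ, ‖T ω‖^2) - 2 * ∫ ω : ℝ, (c ω).re := by
          rw [integral_sub hadd (hcr.const_mul 2), integral_add hE2 hT2,
            MeasureTheory.integral_const_mul]
  have hzero : ∫ ω : ℝ, (c ω).re = 0 := by
    have := integral_re (μ := (volume : Measure ℝ)) (f := c) hcI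
    rw [show ∫ ω : ℝ, c ω = 0 from horth T hT] at this
    simpa using this
  rw [hsplit, hzero]
  ring
end

section
/- Let α > 0, γ > 0, κ ∈ ℤ, and a = √(γ² + α²κ⁴). Define for a strictly proper stable rational ρ the cost J(ρ) = (1/2π)∫_{-∞}^{∞} |γ/(1+iω) + (γ/(1+iω))ρ(iω)|² + |(ακ²-1)/(1+iω) + ((iω+ακ²)/(1+iω))ρ(iω)|² dω. Then the function ρ*(s) = (1 - a)/(s + a) satisfies J(ρ*) ≤ J(ρ) for all strictly proper stable rational ρ. -/
open Polynomial Complex MeasureTheory Filter Set Topology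

/-- Evaluation of a rational function at a complex point. -/
noncomputable def ratEval (f : RatFunc ℂ) (z : ℂ) : ℂ := f.num.eval z / f.denom.eval z

/-- The per-mode H₂ cost functional for the diffusion equation. -/
noncomputable def modeCost (α γ : ℝ) (κ : ℤ) (ρ : RatFunc ℂ) : ℝ :=
  (1 / (2 * Real.pi)) * ∫ ω : ℝ,
    (‖(γ : ℂ) / (1 + I * ω) + ((γ : ℂ) / (1 + I * ω)) * ratEval ρ (I * ω)‖^2
     + ‖((α : ℂ) * (κ : ℂ)^2 - 1) / (1 + I * ω)
         + ((I * ω + (α : ℂ) * (κ : ℂ)^2) / (1 + I * ω)) * ratEval ρ (I * ω)‖^2)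

lemma poly_key (p : ℂ[X]) : ∀ z : ℂ, 1 ≤ ‖z‖ →
    ‖p.eval z / z ^ p.natDegree - p.leadingCoeff‖
      ≤ (∑ i ∈ Finset.range p.natDegree, ‖p.coeff i‖) / ‖z‖ := by
  set d := p.natDegree with hd
  set S := ∑ i ∈ Finset.range d, ‖p.coeff i‖ with hS
  intro z hz
  have hz0 : z ≠ 0 := by
    intro h; rw [h, norm_zero] at hz; linarith
  have hzd : (z : ℂ) ^ d ≠ 0 := pow_ne_zero _ hz0
  have hznorm : (0:ℝ) < ‖z‖ := by positivity
  have hSnn : 0 ≤ S := Finset.sum_nonneg fun i _ => norm_nonneg _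
  have hsplit : p.eval z - p.leadingCoeff * z ^ d
      = ∑ i ∈ Finset.range d, p.coeff i * z ^ i := by
    rw [Polynomial.eval_eq_sum_range, Finset.sum_range_succ]
    simp only [Polynomial.leadingCoeff, ← hd]
    ring
  rcases Nat.eq_zero_or_pos d with h0 | hpos
  · have h2 : p.eval z - p.leadingCoeff * z ^ d = 0 := by
      rw [hsplit, h0]; simp
    have he : p.eval z / z ^ d - p.leadingCoeff = 0 := by
      field_simp at h2 ⊢
      linear_combination h2
    rw [he, norm_zero]
    exact div_nonneg hSnn hznorm.le
  · have h1 : ‖p.eval z - p.leadingCoeff * z ^ d‖ ≤ S * ‖z‖ ^ (d - 1) := by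
      rw [hsplit]
      calc ‖∑ i ∈ Finset.range d, p.coeff i * z ^ i‖
          ≤ ∑ i ∈ Finset.range d, ‖p.coeff i * z ^ i‖ := norm_sum_le _ _
        _ ≤ ∑ i ∈ Finset.range d, ‖p.coeff i‖ * ‖z‖ ^ (d - 1) := by
            apply Finset.sum_le_sum
            intro i hi
            rw [Finset.mem_range] at hi
            rw [norm_mul, norm_pow]
            exact mul_le_mul_of_nonneg_left
              (pow_le_pow_right₀ hz (by omega)) (norm_nonneg _)
        _ = S * ‖z‖ ^ (d - 1) := by rw [← Finset.sum_mul]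
    have heq : p.eval z / z ^ d - p.leadingCoeff
        = (p.eval z - p.leadingCoeff * z ^ d) / z ^ d := by
      field_simp
    rw [heq, norm_div, norm_pow]
    rw [div_le_div_iff₀ (by positivity) hznorm]
    have hdd : d = (d - 1) + 1 := by omega
    calc ‖p.eval z - p.leadingCoeff * z ^ d‖ * ‖z‖
        ≤ (S * ‖z‖ ^ (d-1)) * ‖z‖ :=
          mul_le_mul_of_nonneg_right h1 (le_of_lt hznorm)
      _ = S * ‖z‖ ^ d := by
          conv_rhs => rw [hdd]
          ring

lemma poly_tendsto (p : ℂ[X]) :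
    Tendsto (fun z : ℂ => p.eval z / z ^ p.natDegree) (cocompact ℂ) (𝓝 p.leadingCoeff) := by
  rw [← tendsto_sub_nhds_zero_iff]
  apply squeeze_zero_norm'
  · have : ∀ᶠ z : ℂ in cocompact ℂ, 1 ≤ ‖z‖ := by
      have := tendsto_norm_cocompact_atTop (E := ℂ)
      exact this.eventually_ge_atTop 1
    exact this.mono fun z hz => poly_key p z hz
  · have h1 : Tendsto (fun z : ℂ => ‖z‖) (cocompact ℂ) atTop :=
      tendsto_norm_cocompact_atTop
    simpa using (tendsto_const_nhds.div_atTop h1 :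
      Tendsto (fun z : ℂ => (∑ i ∈ Finset.range p.natDegree, ‖p.coeff i‖) / ‖z‖)
        (cocompact ℂ) (𝓝 0))

lemma poly_bound (p q : ℂ[X]) (k : ℕ) (hdeg : p.degree + k ≤ q.degree)
    (hq : ∀ z : ℂ, 0 ≤ z.re → q.eval z ≠ 0) :
    ∃ C : ℝ, ∀ z : ℂ, 0 ≤ z.re → ‖p.eval z‖ * (1 + ‖z‖) ^ k ≤ C * ‖q.eval z‖ := by
  have hq0 : q ≠ 0 := by
    intro h
    exact hq 0 (by simp) (by simp [h])
  rcases eq_or_ne p 0 with hp0 | hp0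
  · exact ⟨0, fun z hz => by simp [hp0]⟩
  have hdegn : p.natDegree + k ≤ q.natDegree := by
    rw [Polynomial.degree_eq_natDegree hp0, Polynomial.degree_eq_natDegree hq0] at hdeg
    exact_mod_cast hdeg
  set dp := p.natDegree
  set dq := q.natDegree
  set Lq := ‖q.leadingCoeff‖ with hLq
  have hLqpos : 0 < Lq := by
    rw [hLq, norm_pos_iff]
    exact Polynomial.leadingCoeff_ne_zero.mpr hq0
  set Lp := ‖p.leadingCoeff‖ with hLp
  -- eventual bounds along cocompact
  have ev1 : ∀ᶠ z : ℂ in cocompact ℂ, Lq / 2 ≤ ‖q.eval z / z ^ dq‖ :=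
    (poly_tendsto q).norm.eventually_const_le (by linarith)
  have ev2 : ∀ᶠ z : ℂ in cocompact ℂ, ‖p.eval z / z ^ dp‖ ≤ Lp + 1 :=
    (poly_tendsto p).norm.eventually_le_const (by linarith)
  have ev3 : ∀ᶠ z : ℂ in cocompact ℂ, 1 ≤ ‖z‖ :=
    (tendsto_norm_cocompact_atTop (E := ℂ)).eventually_ge_atTop 1
  have hC1 : ∀ z : ℂ, Lq / 2 ≤ ‖q.eval z / z ^ dq‖ → ‖p.eval z / z ^ dp‖ ≤ Lp + 1 →
      1 ≤ ‖z‖ → ‖p.eval z‖ * (1 + ‖z‖) ^ k ≤ ((Lp + 1) * 2 ^ k * (2 / Lq)) * ‖q.eval z‖ := by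
    intro z h1 h2 h3
    have hz0 : z ≠ 0 := by intro h; rw [h, norm_zero] at h3; linarith
    have hzpos : (0:ℝ) < ‖z‖ := by positivity
    have hqe : Lq / 2 * ‖z‖ ^ dq ≤ ‖q.eval z‖ := by
      have := mul_le_mul_of_nonneg_right h1 (le_of_lt (pow_pos hzpos dq))
      rwa [norm_div, norm_pow, div_mul_cancel₀] at this
      positivity
    have hpe : ‖p.eval z‖ ≤ (Lp + 1) * ‖z‖ ^ dp := by
      have := mul_le_mul_of_nonneg_right h2 (le_of_lt (pow_pos hzpos dp))
      rwa [norm_div, norm_pow, div_mul_cancel₀] at this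
      positivity
    have hk : (1 + ‖z‖) ^ k ≤ 2 ^ k * ‖z‖ ^ k := by
      rw [← mul_pow]
      exact pow_le_pow_left₀ (by positivity) (by linarith) k
    calc ‖p.eval z‖ * (1 + ‖z‖) ^ k
        ≤ ((Lp + 1) * ‖z‖ ^ dp) * (2 ^ k * ‖z‖ ^ k) :=
          mul_le_mul hpe hk (by positivity) (by positivity)
      _ = (Lp + 1) * 2 ^ k * ‖z‖ ^ (dp + k) := by rw [pow_add]; ring
      _ ≤ (Lp + 1) * 2 ^ k * ‖z‖ ^ dq := by
          apply mul_le_mul_of_nonneg_left (pow_le_pow_right₀ h3 hdegn) (by positivity)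
      _ ≤ (Lp + 1) * 2 ^ k * ((2 / Lq) * ‖q.eval z‖) := by
          apply mul_le_mul_of_nonneg_left _ (by positivity)
          calc ‖z‖ ^ dq = (Lq / 2 * ‖z‖ ^ dq) * (2 / Lq) := by field_simp
            _ ≤ ‖q.eval z‖ * (2 / Lq) := by
                apply mul_le_mul_of_nonneg_right hqe (by positivity)
            _ = 2 / Lq * ‖q.eval z‖ := by ring
      _ = ((Lp + 1) * 2 ^ k * (2 / Lq)) * ‖q.eval z‖ := by ring
  -- split into compact part and tail
  obtain ⟨K, hK, hKsub⟩ := (hasBasis_cocompact.eventually_iff).mp ((ev1.and ev2).and ev3)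
  have hScl : IsClosed {z : ℂ | 0 ≤ z.re} := isClosed_le continuous_const Complex.continuous_re
  have hKS : IsCompact (K ∩ {z : ℂ | 0 ≤ z.re}) := hK.inter_right hScl
  have hcont : ContinuousOn (fun z : ℂ => ‖p.eval z‖ * (1 + ‖z‖) ^ k / ‖q.eval z‖)
      (K ∩ {z : ℂ | 0 ≤ z.re}) := by
    apply ContinuousOn.div
    · fun_prop
    · fun_prop
    · intro z hz
      simpa using hq z hz.2
  obtain ⟨C2, hC2⟩ := hKS.exists_bound_of_continuousOn hcont
  refine ⟨max ((Lp + 1) * 2 ^ k * (2 / Lq)) C2, fun z hz => ?_⟩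
  by_cases hzK : z ∈ K
  · have hqz : (0:ℝ) < ‖q.eval z‖ := by
      rw [norm_pos_iff]; exact hq z hz
    have := hC2 z ⟨hzK, hz⟩
    rw [Real.norm_eq_abs] at this
    have h2 : ‖p.eval z‖ * (1 + ‖z‖) ^ k / ‖q.eval z‖ ≤ C2 := (le_abs_self _).trans this
    rw [div_le_iff₀ hqz] at h2
    calc ‖p.eval z‖ * (1 + ‖z‖) ^ k ≤ C2 * ‖q.eval z‖ := h2
      _ ≤ _ := mul_le_mul_of_nonneg_right (le_max_right _ _) (norm_nonneg _)
  · have hmem := hKsub hzK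
    calc ‖p.eval z‖ * (1 + ‖z‖) ^ k
        ≤ ((Lp + 1) * 2 ^ k * (2 / Lq)) * ‖q.eval z‖ :=
          hC1 z hmem.1.1 hmem.1.2 hmem.2
      _ ≤ _ := mul_le_mul_of_nonneg_right (le_max_left _ _) (norm_nonneg _)

lemma axis_re (ω : ℝ) : (I * (ω:ℂ)).re = 0 := by simp
lemma axis_norm (ω : ℝ) : ‖(I * (ω:ℂ))‖ = |ω| := by
  rw [norm_mul]; simp [Complex.norm_real]

lemma one_add_sq_le (ω : ℝ) : 1 + ω^2 ≤ (1 + |ω|)^2 := by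
  have : 0 ≤ |ω| := abs_nonneg ω
  nlinarith [_root_.sq_abs ω]

lemma cont_axis (p q : ℂ[X]) (hq : ∀ z : ℂ, 0 ≤ z.re → q.eval z ≠ 0) :
    Continuous (fun ω : ℝ => p.eval (I * ω) / q.eval (I * ω)) := by
  apply Continuous.div
  · fun_prop
  · fun_prop
  · intro ω
    exact hq _ (le_of_eq (axis_re ω).symm)

lemma axis_bound (p q : ℂ[X]) (k : ℕ) (hdeg : p.degree + k ≤ q.degree)
    (hq : ∀ z : ℂ, 0 ≤ z.re → q.eval z ≠ 0) :
    ∃ C : ℝ, 0 ≤ C ∧ ∀ ω : ℝ, ‖p.eval (I * ω) / q.eval (I * ω)‖ ≤ C / (1 + |ω|) ^ k := by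
  obtain ⟨C, hC⟩ := poly_bound p q k hdeg hq
  refine ⟨max C 0, le_max_right _ _, fun ω => ?_⟩
  have hz : (0:ℝ) ≤ (I * (ω:ℂ)).re := le_of_eq (axis_re ω).symm
  have hqz : (0:ℝ) < ‖q.eval (I * ω)‖ := by
    rw [norm_pos_iff]; exact hq _ hz
  have h1 := hC (I * ω) hz
  rw [axis_norm] at h1
  rw [norm_div, div_le_div_iff₀ hqz (by positivity)]
  calc ‖p.eval (I * ω)‖ * (1 + |ω|) ^ k ≤ C * ‖q.eval (I * ω)‖ := h1
    _ ≤ max C 0 * ‖q.eval (I * ω)‖ :=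
        mul_le_mul_of_nonneg_right (le_max_left _ _) (norm_nonneg _)
    _ = max C 0 * ‖q.eval (I * ↑ω)‖ := rfl

lemma integrable_axis_sq (p q : ℂ[X]) (hdeg : p.degree + 1 ≤ q.degree)
    (hq : ∀ z : ℂ, 0 ≤ z.re → q.eval z ≠ 0) :
    Integrable (fun ω : ℝ => ‖p.eval (I * ω) / q.eval (I * ω)‖ ^ 2) := by
  obtain ⟨C, hC0, hC⟩ := axis_bound p q 1 hdeg hq
  apply Integrable.mono' ((integrable_inv_one_add_sq).const_mul (C^2))
  · exact ((cont_axis p q hq).norm.pow 2).aestronglyMeasurable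
  · filter_upwards with ω
    rw [Real.norm_eq_abs, _root_.abs_of_nonneg (by positivity)]
    have h1 := hC ω
    have h2 : ‖p.eval (I * ω) / q.eval (I * ω)‖ ^ 2 ≤ (C / (1 + |ω|) ^ 1) ^ 2 := by
      apply pow_le_pow_left₀ (norm_nonneg _) h1
    refine h2.trans ?_
    rw [div_pow, pow_one]
    rw [div_le_iff₀ (by positivity)]
    have h3 : 1 + ω^2 ≤ (1 + |ω|)^2 := one_add_sq_le ω
    have h4 : (0:ℝ) < 1 + ω^2 := by positivity
    calc C^2 * (1 + ω^2)⁻¹ * (1 + |ω|)^2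
        ≥ C^2 * (1 + ω^2)⁻¹ * (1 + ω^2) := by
          apply mul_le_mul_of_nonneg_left h3 (by positivity)
      _ = C^2 := by field_simp
    -- direction check

lemma integrable_axis (p q : ℂ[X]) (hdeg : p.degree + 2 ≤ q.degree)
    (hq : ∀ z : ℂ, 0 ≤ z.re → q.eval z ≠ 0) :
    Integrable (fun ω : ℝ => p.eval (I * ω) / q.eval (I * ω)) := by
  obtain ⟨C, hC0, hC⟩ := axis_bound p q 2 hdeg hq
  apply Integrable.mono' ((integrable_inv_one_add_sq).const_mul C)
  · exact (cont_axis p q hq).aestronglyMeasurable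
  · filter_upwards with ω
    refine (hC ω).trans ?_
    rw [div_le_iff₀ (by positivity)]
    have h3 : 1 + ω^2 ≤ (1 + |ω|)^2 := one_add_sq_le ω
    calc C * (1 + ω^2)⁻¹ * (1 + |ω|)^2
        ≥ C * (1 + ω^2)⁻¹ * (1 + ω^2) := by
          apply mul_le_mul_of_nonneg_left h3 (by positivity)
      _ = C := by field_simp

lemma rhp_bound (p q : ℂ[X]) (hdeg : p.degree + 2 ≤ q.degree)
    (hq : ∀ z : ℂ, 0 ≤ z.re → q.eval z ≠ 0) :
    ∃ C : ℝ, 0 ≤ C ∧ ∀ z : ℂ, 0 ≤ z.re → ∀ R : ℝ, 1 ≤ R → R ≤ ‖z‖ →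
      ‖p.eval z / q.eval z‖ ≤ C / R ^ 2 := by
  obtain ⟨C, hC⟩ := poly_bound p q 2 hdeg hq
  refine ⟨max C 0, le_max_right _ _, fun z hz R hR hRz => ?_⟩
  have hqz : (0:ℝ) < ‖q.eval z‖ := by rw [norm_pos_iff]; exact hq z hz
  have h1 := hC z hz
  have hRpos : (0:ℝ) < R := by linarith
  rw [norm_div, div_le_div_iff₀ hqz (by positivity)]
  have h2 : R ^ 2 ≤ (1 + ‖z‖) ^ 2 := by
    apply pow_le_pow_left₀ (by positivity)
    have := norm_nonneg z; linarith
  calc ‖p.eval z‖ * R ^ 2 ≤ ‖p.eval z‖ * (1 + ‖z‖) ^ 2 :=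
        mul_le_mul_of_nonneg_left h2 (norm_nonneg _)
    _ ≤ C * ‖q.eval z‖ := h1
    _ ≤ max C 0 * ‖q.eval z‖ :=
        mul_le_mul_of_nonneg_right (le_max_left _ _) (norm_nonneg _)

lemma integral_axis_zero (p q : ℂ[X]) (hdeg : p.degree + 2 ≤ q.degree)
    (hq : ∀ z : ℂ, 0 ≤ z.re → q.eval z ≠ 0) :
    ∫ ω : ℝ, p.eval (I * ω) / q.eval (I * ω) = 0 := by
  set f : ℂ → ℂ := fun z => p.eval z / q.eval z with hf
  have hint : Integrable (fun ω : ℝ => p.eval (I * ω) / q.eval (I * ω)) :=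
    integrable_axis p q hdeg hq
  obtain ⟨C, hC0, hC⟩ := rhp_bound p q hdeg hq
  -- the left-side integral over [-R, R]
  have key : ∀ R : ℝ, 1 ≤ R →
      ‖∫ y in (-R)..R, p.eval (I * y) / q.eval (I * y)‖ ≤ 4 * C / R := by
    intro R hR
    have hR0 : (0:ℝ) < R := by linarith
    set z : ℂ := ⟨0, -R⟩ with hz
    set w : ℂ := ⟨R, R⟩ with hw
    have hzre : z.re = 0 := rfl
    have hwre : w.re = R := rfl
    have hzim : z.im = -R := rfl
    have hwim : w.im = R := rfl
    have hdiff : DifferentiableOn ℂ f (Set.uIcc z.re w.re ×ℂ Set.uIcc z.im w.im) := by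
      intro x hx
      rw [Complex.mem_reProdIm] at hx
      have hxre : 0 ≤ x.re := by
        have := hx.1
        rw [hzre, hwre, Set.uIcc_of_le hR0.le] at this
        exact this.1
      exact ((p.differentiable.differentiableAt).div
        (q.differentiable.differentiableAt) (hq x hxre)).differentiableWithinAt
    have hrect := Complex.integral_boundary_rect_eq_zero_of_differentiableOn f z w hdiff
    rw [hzre, hwre, hzim, hwim] at hrect
    -- bound the three other sides
    have hbA : ‖∫ x in (0:ℝ)..R, f (x + (-R : ℝ) * I)‖ ≤ C / R ^ 2 * |R - 0| := by
      apply intervalIntegral.norm_integral_le_of_norm_le_const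
      intro x hx
      rw [Set.uIoc_of_le hR0.le] at hx
      apply hC _ (by simp [hx.1.le]) R hR
      have him := Complex.abs_im_le_norm ((x:ℂ) + (↑(-R:ℝ)) * I)
      refine le_trans ?_ him
      simp [abs_of_pos hR0]
    have hbB : ‖∫ x in (0:ℝ)..R, f (x + (R : ℝ) * I)‖ ≤ C / R ^ 2 * |R - 0| := by
      apply intervalIntegral.norm_integral_le_of_norm_le_const
      intro x hx
      rw [Set.uIoc_of_le hR0.le] at hx
      apply hC _ (by simp [hx.1.le]) R hR
      have him := Complex.abs_im_le_norm ((x:ℂ) + (↑(R:ℝ)) * I)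
      refine le_trans ?_ him
      simp [abs_of_pos hR0]
    have hbC : ‖∫ y in (-R)..R, f ((R:ℝ) + y * I)‖ ≤ C / R ^ 2 * |R - (-R)| := by
      apply intervalIntegral.norm_integral_le_of_norm_le_const
      intro y hy
      apply hC _ (by simp [hR0.le]) R hR
      have him := Complex.abs_re_le_norm ((↑(R:ℝ):ℂ) + (y:ℂ) * I)
      refine le_trans ?_ him
      simp [abs_of_pos hR0]
    have hleft : (I • ∫ y in (-R)..R, f ((0:ℝ) + y * I))
        = (∫ x in (0:ℝ)..R, f (x + (-R:ℝ) * I)) - (∫ x in (0:ℝ)..R, f (x + (R:ℝ) * I))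
          + I • (∫ y in (-R)..R, f ((R:ℝ) + y * I)) := by
      simp only [smul_eq_mul] at hrect ⊢
      linear_combination -hrect
    have harg : ∀ y : ℝ, ((0:ℝ) : ℂ) + (y:ℂ) * I = I * y := by
      intro y; push_cast; ring
    have hleft2 : ∫ y in (-R)..R, f ((0:ℝ) + y * I)
        = ∫ y in (-R)..R, p.eval (I * y) / q.eval (I * y) := by
      apply intervalIntegral.integral_congr
      intro y _
      simp only [harg]
      rfl
    rw [hleft2] at hleft
    have hnorm : ‖∫ y in (-R)..R, p.eval (I * y) / q.eval (I * y)‖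
        = ‖I • ∫ y in (-R)..R, p.eval (I * y) / q.eval (I * y)‖ := by
      rw [norm_smul, Complex.norm_I, one_mul]
    rw [hnorm, hleft]
    have habs1 : |R - 0| = R := by rw [abs_of_pos]; ring; linarith
    have habs2 : |R - (-R)| = 2 * R := by rw [abs_of_pos] <;> linarith
    calc ‖(∫ x in (0:ℝ)..R, f (x + (-R:ℝ) * I)) - (∫ x in (0:ℝ)..R, f (x + (R:ℝ) * I))
          + I • (∫ y in (-R)..R, f ((R:ℝ) + y * I))‖
        ≤ ‖(∫ x in (0:ℝ)..R, f (x + (-R:ℝ) * I))‖ + ‖(∫ x in (0:ℝ)..R, f (x + (R:ℝ) * I))‖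
          + ‖I • (∫ y in (-R)..R, f ((R:ℝ) + y * I))‖ := by
          apply (norm_add_le _ _).trans
          gcongr
          exact norm_sub_le _ _
      _ ≤ C / R ^ 2 * |R - 0| + C / R ^ 2 * |R - 0| + C / R ^ 2 * |R - (-R)| := by
          rw [norm_smul, Complex.norm_I, one_mul]
          gcongr
      _ = 4 * C / R := by
          rw [habs1, habs2]
          field_simp
          ring
  -- conclude
  have h1 : Tendsto (fun R : ℝ => ∫ y in (-R)..R, p.eval (I * y) / q.eval (I * y)) atTop
      (𝓝 (∫ ω : ℝ, p.eval (I * ω) / q.eval (I * ω))) :=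
    intervalIntegral_tendsto_integral hint tendsto_neg_atTop_atBot tendsto_id
  have h2 : Tendsto (fun R : ℝ => ∫ y in (-R)..R, p.eval (I * y) / q.eval (I * y)) atTop
      (𝓝 0) := by
    apply squeeze_zero_norm'
    · filter_upwards [eventually_ge_atTop (1:ℝ)] with R hR
      exact key R hR
    · have : Tendsto (fun R : ℝ => 4 * C / R) atTop (𝓝 0) :=
        tendsto_const_nhds.div_atTop tendsto_id
      exact this
  exact tendsto_nhds_unique h1 h2

set_option maxHeartbeats 1000000 in
lemma key_identity (A B s N M N' M' : ℂ) (hM : M ≠ 0) (hM' : M' ≠ 0)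
    (h1 : 1 + s ≠ 0) (h1' : 1 - s ≠ 0) (ha : s + A ≠ 0) (ha' : A - s ≠ 0) :
    (A^2 - B^2) * ((1 + N/M) * (1 + N'/M')) / ((1+s)*(1-s))
      + ((B-1)/(1+s) + (s+B)/(1+s) * (N/M)) * ((B-1)/(1-s) + (B-s)/(1-s) * (N'/M'))
    = (A^2 - B^2) * ((1 + (1-A)/(s+A)) * (1 + (1-A)/(A-s))) / ((1+s)*(1-s))
      + ((B-1)/(1+s) + (s+B)/(1+s) * ((1-A)/(s+A)))
          * ((B-1)/(1-s) + (B-s)/(1-s) * ((1-A)/(A-s)))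
      + (((s+A)*N - (1-A)*M)/(M*(1+s))) * (((A-s)*N' - (1-A)*M')/(M'*(1-s)))
      + ((A-B) * (((s+A)*N - (1-A)*M)/(M*((s+A)*(1+s))))
         + (A-B) * (((A-s)*N' - (1-A)*M')/(M'*((A-s)*(1-s))))) := by
  set D : ℂ := M*M'*(1+s)*(1-s)*(s+A)*(A-s) with hD
  have hDne : D ≠ 0 := by
    rw [hD]
    exact mul_ne_zero (mul_ne_zero (mul_ne_zero (mul_ne_zero (mul_ne_zero hM hM') h1) h1') ha) ha'
  have e1 : (A^2 - B^2) * ((1 + N/M) * (1 + N'/M')) / ((1+s)*(1-s))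
      = (A^2 - B^2)*(M+N)*(M'+N')*(s+A)*(A-s) / D := by
    rw [hD]; field_simp
  have e2 : ((B-1)/(1+s) + (s+B)/(1+s) * (N/M)) * ((B-1)/(1-s) + (B-s)/(1-s) * (N'/M'))
      = ((B-1)*M+(s+B)*N)*((B-1)*M'+(B-s)*N')*(s+A)*(A-s) / D := by
    rw [hD]; field_simp
  have e3 : (A^2 - B^2) * ((1 + (1-A)/(s+A)) * (1 + (1-A)/(A-s))) / ((1+s)*(1-s))
      = (A^2 - B^2)*(1+s)*(1-s)*M*M' / D := by
    rw [hD]; field_simp; ring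
  have e4 : ((B-1)/(1+s) + (s+B)/(1+s) * ((1-A)/(s+A)))
          * ((B-1)/(1-s) + (B-s)/(1-s) * ((1-A)/(A-s)))
      = (B-A)*(B-A)*(1+s)*(1-s)*M*M' / D := by
    rw [hD]; field_simp; ring
  have e5 : (((s+A)*N - (1-A)*M)/(M*(1+s))) * (((A-s)*N' - (1-A)*M')/(M'*(1-s)))
      = ((s+A)*N - (1-A)*M)*((A-s)*N' - (1-A)*M')*(s+A)*(A-s) / D := by
    rw [hD]; field_simp
  have e6 : (A-B) * (((s+A)*N - (1-A)*M)/(M*((s+A)*(1+s))))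
      = (A-B)*((s+A)*N - (1-A)*M)*(A-s)*(1-s)*M' / D := by
    rw [hD]; field_simp
  have e7 : (A-B) * (((A-s)*N' - (1-A)*M')/(M'*((A-s)*(1-s))))
      = (A-B)*((A-s)*N' - (1-A)*M')*(s+A)*(1+s)*M / D := by
    rw [hD]; field_simp
  rw [e1, e2, e3, e4, e5, e6, e7]
  simp only [← add_div]
  rw [div_eq_div_iff hDne hDne]
  ring

lemma ratEval_div' (p q : ℂ[X]) (hq : q ≠ 0) (z : ℂ) (hz : q.eval z ≠ 0) :
    ratEval (algebraMap ℂ[X] (RatFunc ℂ) p / algebraMap ℂ[X] (RatFunc ℂ) q) z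
      = p.eval z / q.eval z := by
  set f := algebraMap ℂ[X] (RatFunc ℂ) p / algebraMap ℂ[X] (RatFunc ℂ) q with hf
  have hcross : f.num * q = p * f.denom := by
    have h1 : algebraMap ℂ[X] (RatFunc ℂ) f.num / algebraMap ℂ[X] (RatFunc ℂ) f.denom = f :=
      RatFunc.num_div_denom f
    have hd0 : algebraMap ℂ[X] (RatFunc ℂ) f.denom ≠ 0 := by
      simpa using f.denom_ne_zero
    have hq0 : algebraMap ℂ[X] (RatFunc ℂ) q ≠ 0 := by
      simpa using hq
    rw [hf, div_eq_div_iff hd0 hq0] at h1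
    have := h1
    rw [← map_mul, ← map_mul] at this
    exact IsFractionRing.injective ℂ[X] (RatFunc ℂ) this
  have hdvd : f.denom ∣ q := by
    have : f.denom ∣ f.num * q := ⟨p, by linear_combination hcross⟩
    exact (RatFunc.isCoprime_num_denom f).symm.dvd_of_dvd_mul_left this
  have hdz : f.denom.eval z ≠ 0 := by
    obtain ⟨r, hr⟩ := hdvd
    intro h0
    rw [hr, Polynomial.eval_mul, h0, zero_mul] at hz
    exact hz rfl
  have heval : f.num.eval z * q.eval z = p.eval z * f.denom.eval z := by
    have := congrArg (Polynomial.eval z) hcross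
    simpa [Polynomial.eval_mul] using this
  rw [ratEval, div_eq_div_iff hdz hz]
  linear_combination heval

lemma normsq_eq (z : ℂ) : ‖z‖^2 = (z * (starRingEnd ℂ) z).re := by
  rw [Complex.mul_conj, Complex.ofReal_re, Complex.normSq_eq_norm_sq]

lemma key_identity2 (A B G s N M N' M' : ℂ) (hrel : G^2 = A^2 - B^2)
    (hM : M ≠ 0) (hM' : M' ≠ 0) (h1 : 1 + s ≠ 0) (h1' : 1 - s ≠ 0)
    (ha : s + A ≠ 0) (ha' : A - s ≠ 0) :
    (G/(1+s) * (1 + N/M)) * (G/(1-s) * (1 + N'/M'))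
      + ((B-1)/(1+s) + (s+B)/(1+s) * (N/M)) * ((B-1)/(1-s) + (B-s)/(1-s) * (N'/M'))
    = (G/(1+s) * (1 + (1-A)/(s+A))) * (G/(1-s) * (1 + (1-A)/(A-s)))
      + ((B-1)/(1+s) + (s+B)/(1+s) * ((1-A)/(s+A)))
          * ((B-1)/(1-s) + (B-s)/(1-s) * ((1-A)/(A-s)))
      + (((s+A)*N - (1-A)*M)/(M*(1+s))) * (((A-s)*N' - (1-A)*M')/(M'*(1-s)))
      + ((A-B) * (((s+A)*N - (1-A)*M)/(M*((s+A)*(1+s))))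
         + (A-B) * (((A-s)*N' - (1-A)*M')/(M'*((A-s)*(1-s))))) := by
  have g1 : (G/(1+s) * (1 + N/M)) * (G/(1-s) * (1 + N'/M'))
      = G^2 * ((1 + N/M) * (1 + N'/M')) / ((1+s)*(1-s)) := by
    simp only [div_eq_mul_inv, mul_inv]; ring
  have g2 : (G/(1+s) * (1 + (1-A)/(s+A))) * (G/(1-s) * (1 + (1-A)/(A-s)))
      = G^2 * ((1 + (1-A)/(s+A)) * (1 + (1-A)/(A-s))) / ((1+s)*(1-s)) := by
    simp only [div_eq_mul_inv, mul_inv]; ring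
  rw [g1, g2, hrel]
  exact key_identity A B s N M N' M' hM hM' h1 h1' ha ha'

lemma ne_zero_of_re_pos {z : ℂ} (h : 0 < z.re) : z ≠ 0 := by
  intro h0; rw [h0] at h; simp at h

/-- The rational function ρ*(s) = (1 - a)/(s + a), a = √(γ² + α²κ⁴), minimizes the
per-mode H₂ cost over all strictly proper stable rational ρ. -/
theorem optimal_rho_minimizes_mode_cost
    (α γ : ℝ) (hα : 0 < α) (hγ : 0 < γ) (κ : ℤ)
    (a : ℝ) (ha : a = Real.sqrt (γ^2 + α^2 * (κ : ℝ)^4)) :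
    ∀ ρ : RatFunc ℂ, StrictlyProperStable ρ →
      modeCost α γ κ (RatFunc.C ((1 : ℂ) - a) / (RatFunc.X + RatFunc.C (a : ℂ)))
        ≤ modeCost α γ κ ρ := by
  intro ρ hρ
  obtain ⟨hdeg, hstab⟩ := hρ
  set b : ℝ := α * (κ:ℝ)^2 with hb
  have ha0 : 0 < a := by
    rw [ha]
    apply Real.sqrt_pos.mpr
    positivity
  have ha2 : a^2 = γ^2 + b^2 := by
    rw [ha, Real.sq_sqrt (by positivity), hb]
    ring
  set A : ℂ := ((a:ℝ):ℂ) with hA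
  set B : ℂ := ((b:ℝ):ℂ) with hB
  set G : ℂ := ((γ:ℝ):ℂ) with hG
  have hrel : G^2 = A^2 - B^2 := by
    have h' : γ^2 = a^2 - b^2 := by linarith
    rw [hA, hB, hG]
    exact_mod_cast congrArg Complex.ofReal h'
  have hBcast : (α:ℂ) * (κ:ℂ)^2 = B := by
    rw [hB, hb]; push_cast; ring
  set n : ℂ[X] := ρ.num with hn
  set m : ℂ[X] := ρ.denom with hm
  have hm0 : m ≠ 0 := ρ.denom_ne_zero
  -- evaluation of the optimal rho
  have hopt_eval : ∀ ω : ℝ,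
      ratEval (RatFunc.C ((1 : ℂ) - A) / (RatFunc.X + RatFunc.C A)) (I*ω)
        = (1 - A)/(I*ω + A) := by
    intro ω
    rw [hA]
    have hq0 : (X + Polynomial.C A) ≠ (0 : ℂ[X]) := Polynomial.X_add_C_ne_zero A
    have hqe : (X + Polynomial.C A).eval (I*(ω:ℂ)) ≠ 0 := by
      simp only [Polynomial.eval_add, Polynomial.eval_X, Polynomial.eval_C]
      apply _root_.ne_zero_of_re_pos
      rw [hA]
      simp [ha0]
    have hval : RatFunc.C ((1:ℂ) - (a:ℂ)) / (RatFunc.X + RatFunc.C (a:ℂ))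
        = algebraMap ℂ[X] (RatFunc ℂ) (Polynomial.C (1 - A))
            / algebraMap ℂ[X] (RatFunc ℂ) (X + Polynomial.C A) := by
      simp [map_add, RatFunc.algebraMap_C, RatFunc.algebraMap_X, hA]
    rw [hval, ratEval_div' _ _ hq0 _ hqe]
    simp only [Polynomial.eval_add, Polynomial.eval_X, Polynomial.eval_C]
    rfl
  -- the polynomials
  set Pd : ℂ[X] := (X + Polynomial.C A) * n - Polynomial.C (1 - A) * m with hPd
  set Qd : ℂ[X] := m * (X + Polynomial.C 1) with hQd
  set Qc : ℂ[X] := m * ((X + Polynomial.C A) * (X + Polynomial.C 1)) with hQc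
  set p1 : ℂ[X] := Polynomial.C G * (X + Polynomial.C 1) with hp1
  set p2 : ℂ[X] := Polynomial.C (B-1) * (X + Polynomial.C A)
      + Polynomial.C (1-A) * (X + Polynomial.C B) with hp2
  set q1 : ℂ[X] := (X + Polynomial.C 1) * (X + Polynomial.C A) with hq1
  -- degrees
  have hPd_le : Pd.degree ≤ m.degree := by
    rw [hPd]
    apply (Polynomial.degree_sub_le _ _).trans
    apply max_le
    · rw [Polynomial.degree_mul, Polynomial.degree_X_add_C]
      rw [add_comm]
      exact Nat.WithBot.add_one_le_of_lt hdeg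
    · apply (Polynomial.degree_mul_le _ _).trans
      calc (Polynomial.C (1-A)).degree + m.degree ≤ 0 + m.degree := by
            apply add_le_add_left (Polynomial.degree_C_le)
        _ = m.degree := by rw [zero_add]
  have hQd_deg : Qd.degree = m.degree + 1 := by
    rw [hQd, Polynomial.degree_mul, Polynomial.degree_X_add_C]
  have hQc_deg : Qc.degree = m.degree + 2 := by
    rw [hQc, Polynomial.degree_mul, Polynomial.degree_mul, Polynomial.degree_X_add_C,
      Polynomial.degree_X_add_C]
    rfl
  have hPdQd : Pd.degree + 1 ≤ Qd.degree := by
    rw [hQd_deg]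
    exact add_le_add_left hPd_le 1
  have hPdQc : Pd.degree + 2 ≤ Qc.degree := by
    rw [hQc_deg]
    exact add_le_add_left hPd_le 2
  -- stability
  have hz1 : ∀ z : ℂ, 0 ≤ z.re → (z + 1) ≠ 0 := by
    intro z hz
    apply _root_.ne_zero_of_re_pos
    simp only [Complex.add_re, Complex.one_re]
    linarith
  have hzA : ∀ z : ℂ, 0 ≤ z.re → (z + A) ≠ 0 := by
    intro z hz
    apply _root_.ne_zero_of_re_pos
    rw [hA]
    simp only [Complex.add_re, Complex.ofReal_re]
    linarith
  have hq1_stab : ∀ z : ℂ, 0 ≤ z.re → q1.eval z ≠ 0 := by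
    intro z hz
    rw [hq1]
    simp only [Polynomial.eval_mul, Polynomial.eval_add, Polynomial.eval_X, Polynomial.eval_C]
    exact mul_ne_zero (hz1 z hz) (hzA z hz)
  have hQd_stab : ∀ z : ℂ, 0 ≤ z.re → Qd.eval z ≠ 0 := by
    intro z hz
    rw [hQd]
    simp only [Polynomial.eval_mul, Polynomial.eval_add, Polynomial.eval_X, Polynomial.eval_C]
    exact mul_ne_zero (hstab z hz) (hz1 z hz)
  have hQc_stab : ∀ z : ℂ, 0 ≤ z.re → Qc.eval z ≠ 0 := by
    intro z hz
    rw [hQc]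
    simp only [Polynomial.eval_mul, Polynomial.eval_add, Polynomial.eval_X, Polynomial.eval_C]
    exact mul_ne_zero (hstab z hz) (mul_ne_zero (hzA z hz) (hz1 z hz))
  have hq1_deg2 : q1.degree = 2 := by
    rw [hq1, Polynomial.degree_mul, Polynomial.degree_X_add_C, Polynomial.degree_X_add_C]
    rfl
  have hp1q1 : p1.degree + 1 ≤ q1.degree := by
    rw [hq1_deg2, hp1]
    apply (add_le_add_left ((Polynomial.degree_mul_le _ _).trans
      (add_le_add Polynomial.degree_C_le (Polynomial.degree_X_add_C 1).le)) 1).trans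
    norm_num
  have hp2q1 : p2.degree + 1 ≤ q1.degree := by
    rw [hq1_deg2, hp2]
    have h1 : (Polynomial.C (B-1) * (X + Polynomial.C A)).degree ≤ 1 := by
      apply (Polynomial.degree_mul_le _ _).trans
      calc (Polynomial.C (B-1)).degree + (X + Polynomial.C A).degree
          ≤ 0 + (X + Polynomial.C A).degree :=
            add_le_add_left Polynomial.degree_C_le _
        _ = (X + Polynomial.C A).degree := zero_add _
        _ = 1 := Polynomial.degree_X_add_C A
    have h2 : (Polynomial.C (1-A) * (X + Polynomial.C B)).degree ≤ 1 := by
      apply (Polynomial.degree_mul_le _ _).trans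
      calc (Polynomial.C (1-A)).degree + (X + Polynomial.C B).degree
          ≤ 0 + (X + Polynomial.C B).degree :=
            add_le_add_left Polynomial.degree_C_le _
        _ = (X + Polynomial.C B).degree := zero_add _
        _ = 1 := Polynomial.degree_X_add_C B
    apply (add_le_add_left ((Polynomial.degree_add_le _ _).trans (max_le h1 h2)) 1).trans
    norm_num
  -- the functions
  set SD : ℝ → ℝ := fun ω => ‖Pd.eval (I*ω) / Qd.eval (I*ω)‖^2 with hSD
  set CR : ℝ → ℝ := fun ω => 2 * ((A - B) * (Pd.eval (I*ω) / Qc.eval (I*ω))).re with hCR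
  set Fopt : ℝ → ℝ := fun ω =>
    ‖p1.eval (I*ω) / q1.eval (I*ω)‖^2 + ‖p2.eval (I*ω) / q1.eval (I*ω)‖^2 with hFopt
  have hSD_int : Integrable SD := integrable_axis_sq Pd Qd hPdQd hQd_stab
  have hV_int : Integrable (fun ω : ℝ => Pd.eval (I*ω) / Qc.eval (I*ω)) :=
    integrable_axis Pd Qc hPdQc hQc_stab
  have hCR_int : Integrable CR := by
    rw [hCR]
    have h1 : Integrable (fun ω : ℝ => (A - B) * (Pd.eval (I*ω) / Qc.eval (I*ω))) :=
      hV_int.const_mul _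
    have h2 := h1.re
    simp only [RCLike.re_to_complex] at h2
    exact h2.const_mul 2
  have hFopt_int : Integrable Fopt :=
    (integrable_axis_sq p1 q1 hp1q1 hq1_stab).add (integrable_axis_sq p2 q1 hp2q1 hq1_stab)
  have hCR_zero : ∫ ω : ℝ, CR ω = 0 := by
    rw [hCR]
    have h1 : ∀ ω : ℝ, 2 * ((A - B) * (Pd.eval (I*(ω:ℂ)) / Qc.eval (I*ω))).re
        = 2 * RCLike.re ((A - B) * (Pd.eval (I*(ω:ℂ)) / Qc.eval (I*ω))) := by
      intro ω; rw [RCLike.re_to_complex]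
    simp only [h1]
    rw [MeasureTheory.integral_const_mul]
    rw [integral_re (hV_int.const_mul _)]
    rw [MeasureTheory.integral_const_mul, integral_axis_zero Pd Qc hPdQc hQc_stab]
    simp
  -- pointwise identity for the optimal rho
  have hopt_point : ∀ ω : ℝ,
      ‖G / (1 + I*(ω:ℂ)) + (G / (1 + I*(ω:ℂ)))
          * ratEval (RatFunc.C ((1 : ℂ) - A) / (RatFunc.X + RatFunc.C A)) (I*ω)‖^2
        + ‖(B - 1) / (1 + I*(ω:ℂ)) + ((I*(ω:ℂ) + B) / (1 + I*(ω:ℂ)))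
          * ratEval (RatFunc.C ((1 : ℂ) - A) / (RatFunc.X + RatFunc.C A)) (I*ω)‖^2
      = Fopt ω := by
    intro ω
    have hsre : (I*(ω:ℂ)).re = 0 := by simp
    have h1p : (1:ℂ) + I*(ω:ℂ) ≠ 0 := by
      apply _root_.ne_zero_of_re_pos; simp
    have hap : I*(ω:ℂ) + A ≠ 0 := hzA _ (le_of_eq hsre.symm)
    rw [hopt_eval ω]
    have e1 : G/(1 + I*(ω:ℂ)) + (G/(1 + I*(ω:ℂ))) * ((1-A)/(I*(ω:ℂ)+A))
        = p1.eval (I*(ω:ℂ)) / q1.eval (I*(ω:ℂ)) := by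
      have h1p' : (I*(ω:ℂ)) + 1 ≠ 0 := by
        intro h0; apply h1p; linear_combination h0
      simp only [hp1, hq1, Polynomial.eval_mul, Polynomial.eval_add,
        Polynomial.eval_X, Polynomial.eval_C]
      field_simp
      ring
    have e2 : (B-1)/(1 + I*(ω:ℂ)) + ((I*(ω:ℂ)+B)/(1 + I*(ω:ℂ))) * ((1-A)/(I*(ω:ℂ)+A))
        = p2.eval (I*(ω:ℂ)) / q1.eval (I*(ω:ℂ)) := by
      have h1p' : (I*(ω:ℂ)) + 1 ≠ 0 := by
        intro h0; apply h1p; linear_combination h0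
      simp only [hp2, hq1, Polynomial.eval_mul, Polynomial.eval_add,
        Polynomial.eval_X, Polynomial.eval_C]
      field_simp
      ring
    rw [e1, e2, hFopt]
  -- the main pointwise identity
  have hpoint : ∀ ω : ℝ,
      ‖G / (1 + I*(ω:ℂ)) + (G / (1 + I*(ω:ℂ))) * ratEval ρ (I*ω)‖^2
        + ‖(B - 1) / (1 + I*(ω:ℂ)) + ((I*(ω:ℂ) + B) / (1 + I*(ω:ℂ))) * ratEval ρ (I*ω)‖^2
      = Fopt ω + (SD ω + CR ω) := by
    intro ω
    set s : ℂ := I*(ω:ℂ) with hs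
    set N : ℂ := n.eval s with hNdef
    set M : ℂ := m.eval s with hMdef
    have hsre : s.re = 0 := by rw [hs]; simp
    have hsconj : (starRingEnd ℂ) s = -s := by
      rw [hs]; simp
    have hMne : M ≠ 0 := hstab s (le_of_eq hsre.symm)
    have hM'ne : (starRingEnd ℂ) M ≠ 0 := by
      simpa using hMne
    have h1p : (1:ℂ) + s ≠ 0 := by
      apply _root_.ne_zero_of_re_pos; rw [Complex.add_re, Complex.one_re, hsre]; norm_num
    have h1m : (1:ℂ) - s ≠ 0 := by
      apply _root_.ne_zero_of_re_pos; rw [Complex.sub_re, Complex.one_re, hsre]; norm_num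
    have hap : s + A ≠ 0 := hzA s (le_of_eq hsre.symm)
    have ham : A - s ≠ 0 := by
      apply _root_.ne_zero_of_re_pos; rw [Complex.sub_re, hsre, hA, Complex.ofReal_re]; linarith
    have hphi : ratEval ρ s = N / M := rfl
    -- conjugation computations
    have hc1 : (starRingEnd ℂ) (G/(1+s) * (1 + N/M))
        = G/(1-s) * (1 + (starRingEnd ℂ) N / (starRingEnd ℂ) M) := by
      rw [hG]
      simp only [map_mul, map_div₀, map_add, map_one, hsconj, Complex.conj_ofReal]
      ring
    have hc2 : (starRingEnd ℂ) ((B-1)/(1+s) + (s+B)/(1+s) * (N/M))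
        = (B-1)/(1-s) + (B-s)/(1-s) * ((starRingEnd ℂ) N / (starRingEnd ℂ) M) := by
      rw [hB]
      simp only [map_mul, map_div₀, map_add, map_sub, map_one, hsconj, Complex.conj_ofReal]
      ring
    -- evaluation computations
    have hPdev : Pd.eval s = (s+A)*N - (1-A)*M := by
      rw [hPd]
      simp only [Polynomial.eval_sub, Polynomial.eval_mul, Polynomial.eval_add,
        Polynomial.eval_X, Polynomial.eval_C]
      rfl
    have hQdev : Qd.eval s = M*(1+s) := by
      rw [hQd]
      simp only [Polynomial.eval_mul, Polynomial.eval_add, Polynomial.eval_X,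
        Polynomial.eval_C]
      ring
    have hQcev : Qc.eval s = M*((s+A)*(1+s)) := by
      rw [hQc]
      simp only [Polynomial.eval_mul, Polynomial.eval_add, Polynomial.eval_X,
        Polynomial.eval_C]
      ring
    -- rewrite LHS into the shape of key_identity2
    have harg1 : G/(1+s) + (G/(1+s)) * (N/M) = G/(1+s) * (1 + N/M) := by ring
    rw [hphi, harg1, normsq_eq, normsq_eq, hc1, hc2, ← Complex.add_re]
    rw [key_identity2 A B G s N M ((starRingEnd ℂ) N) ((starRingEnd ℂ) M)
      hrel hMne hM'ne h1p h1m hap ham]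
    -- now identify the three pieces
    have hx : (1:ℂ) + (1-A)/(s+A) = (s+1)/(s+A) := by
      field_simp
      ring
    have hs1eq : G/(1+s) * (1 + (1-A)/(s+A)) = p1.eval s / q1.eval s := by
      simp only [hp1, hq1, Polynomial.eval_mul, Polynomial.eval_add,
        Polynomial.eval_X, Polynomial.eval_C]
      rw [hx, div_mul_div_comm]
      ring
    have hs1eq' : G/(1-s) * (1 + (1-A)/(A-s))
        = (starRingEnd ℂ) (p1.eval s / q1.eval s) := by
      rw [← hs1eq, hG, hA]
      simp only [map_mul, map_div₀, map_add, map_sub, map_one, hsconj, Complex.conj_ofReal]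
      ring
    have h1p' : s + 1 ≠ 0 := by
      intro h0; apply h1p; linear_combination h0
    have hs2eq : (B-1)/(1+s) + (s+B)/(1+s) * ((1-A)/(s+A)) = p2.eval s / q1.eval s := by
      simp only [hp2, hq1, Polynomial.eval_mul, Polynomial.eval_add,
        Polynomial.eval_X, Polynomial.eval_C]
      rw [div_mul_div_comm, div_add_div _ _ h1p (mul_ne_zero h1p hap),
        div_eq_div_iff (mul_ne_zero h1p (mul_ne_zero h1p hap)) (mul_ne_zero h1p' hap)]
      ring
    have hs2eq' : (B-1)/(1-s) + (B-s)/(1-s) * ((1-A)/(A-s))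
        = (starRingEnd ℂ) (p2.eval s / q1.eval s) := by
      rw [← hs2eq, hA, hB]
      simp only [map_mul, map_div₀, map_add, map_sub, map_one, hsconj, Complex.conj_ofReal]
      ring
    have hDeq : (((s+A)*N - (1-A)*M)/(M*(1+s))) = Pd.eval s / Qd.eval s := by
      rw [hPdev, hQdev]
    have hDeq' : (((A-s)*((starRingEnd ℂ) N) - (1-A)*((starRingEnd ℂ) M))
          /(((starRingEnd ℂ) M)*(1-s)))
        = (starRingEnd ℂ) (Pd.eval s / Qd.eval s) := by
      rw [hPdev, hQdev, hA]
      simp only [map_mul, map_div₀, map_add, map_sub, map_one, hsconj, Complex.conj_ofReal]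
      ring
    have hweq : (A-B) * (((s+A)*N - (1-A)*M)/(M*((s+A)*(1+s))))
        = (A-B) * (Pd.eval s / Qc.eval s) := by
      rw [hPdev, hQcev]
    have hweq' : (A-B) * (((A-s)*((starRingEnd ℂ) N) - (1-A)*((starRingEnd ℂ) M))
          /(((starRingEnd ℂ) M)*((A-s)*(1-s))))
        = (starRingEnd ℂ) ((A-B) * (Pd.eval s / Qc.eval s)) := by
      rw [hPdev, hQcev, hA, hB]
      simp only [map_mul, map_div₀, map_add, map_sub, map_one, hsconj, Complex.conj_ofReal]
      ring
    rw [hs1eq, hs1eq', hs2eq, hs2eq', hDeq, hDeq', hweq, hweq']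
    simp only [Complex.add_re, Complex.conj_re, ← normsq_eq]
    rw [hFopt, hSD, hCR]
    simp only []
    ring
  -- final assembly
  have hSD_nonneg : 0 ≤ ∫ ω : ℝ, SD ω := by
    apply integral_nonneg
    intro ω
    rw [hSD]
    positivity
  have e_opt : (∫ ω : ℝ,
      (‖G / (1 + I*(ω:ℂ)) + (G / (1 + I*(ω:ℂ)))
          * ratEval (RatFunc.C ((1 : ℂ) - A) / (RatFunc.X + RatFunc.C A)) (I*ω)‖^2
        + ‖(B - 1) / (1 + I*(ω:ℂ)) + ((I*(ω:ℂ) + B) / (1 + I*(ω:ℂ)))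
          * ratEval (RatFunc.C ((1 : ℂ) - A) / (RatFunc.X + RatFunc.C A)) (I*ω)‖^2))
      = ∫ ω : ℝ, Fopt ω :=
    MeasureTheory.integral_congr_ae (Filter.Eventually.of_forall hopt_point)
  have e_rho : (∫ ω : ℝ,
      (‖G / (1 + I*(ω:ℂ)) + (G / (1 + I*(ω:ℂ))) * ratEval ρ (I*ω)‖^2
        + ‖(B - 1) / (1 + I*(ω:ℂ)) + ((I*(ω:ℂ) + B) / (1 + I*(ω:ℂ))) * ratEval ρ (I*ω)‖^2))
      = (∫ ω : ℝ, Fopt ω) + ((∫ ω : ℝ, SD ω) + (∫ ω : ℝ, CR ω)) := by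
    rw [MeasureTheory.integral_congr_ae (Filter.Eventually.of_forall hpoint)]
    have hSC : Integrable (fun ω : ℝ => SD ω + CR ω) := hSD_int.add hCR_int
    have hSC2 : Integrable (fun ω : ℝ => Fopt ω + (SD ω + CR ω)) := hFopt_int.add hSC
    rw [show (∫ ω : ℝ, (Fopt ω + (SD ω + CR ω))) = (∫ ω : ℝ, Fopt ω) + ∫ ω : ℝ, (SD ω + CR ω)
        from MeasureTheory.integral_add hFopt_int hSC,
      show (∫ ω : ℝ, (SD ω + CR ω)) = (∫ ω : ℝ, SD ω) + ∫ ω : ℝ, CR ω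
        from MeasureTheory.integral_add hSD_int hCR_int]
  unfold modeCost
  simp only [← hG, ← hA, ← hB, hBcast]
  rw [e_opt, e_rho, hCR_zero]
  have h2pi : (0:ℝ) ≤ 1/(2*Real.pi) := by positivity
  apply mul_le_mul_of_nonneg_left _ h2pi
  linarith
end

section
/- Let α > 0, γ > 0. For every κ ∈ ℤ and every s with Re(s) ≥ 0, |Φ̂^u_κ(s)| = |ακ² - √(γ² + α²κ⁴)|/|s + √(γ² + α²κ⁴)| ≤ 1. Hence sup_{Re(s)≥0} sup_{κ∈ℤ} |Φ̂^u_κ(s)| < ∞. -/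
open Complex

/-- For every κ ∈ ℤ and every s with Re(s) ≥ 0,
|Φ̂^u_κ(s)| = |ακ² - √(γ² + α²κ⁴)|/|s + √(γ² + α²κ⁴)| ≤ 1; hence the family of
optimal closed-loop control maps is uniformly bounded on the closed right half-plane. -/
theorem optimal_control_maps_uniformly_bounded
    (α γ : ℝ) (hα : 0 < α) (hγ : 0 < γ) :
    (∀ (κ : ℤ) (s : ℂ), 0 ≤ s.re →
      ‖((↑α * (κ : ℂ)^2 - (Real.sqrt (γ^2 + α^2 * (κ : ℝ)^4) : ℂ))
          / (s + (Real.sqrt (γ^2 + α^2 * (κ : ℝ)^4) : ℂ)))‖ ≤ 1) ∧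
    BddAbove {x : ℝ | ∃ (κ : ℤ) (s : ℂ), 0 ≤ s.re ∧
      x = ‖((↑α * (κ : ℂ)^2 - (Real.sqrt (γ^2 + α^2 * (κ : ℝ)^4) : ℂ))
          / (s + (Real.sqrt (γ^2 + α^2 * (κ : ℝ)^4) : ℂ)))‖} := by
  have key : ∀ (κ : ℤ) (s : ℂ), 0 ≤ s.re →
      ‖((↑α * (κ : ℂ)^2 - (Real.sqrt (γ^2 + α^2 * (κ : ℝ)^4) : ℂ))
          / (s + (Real.sqrt (γ^2 + α^2 * (κ : ℝ)^4) : ℂ)))‖ ≤ 1 := by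
    intro κ s hs
    set b : ℝ := α * (κ : ℝ)^2 with hb
    set a : ℝ := Real.sqrt (γ^2 + α^2 * (κ : ℝ)^4) with ha
    have hb0 : 0 ≤ b := by positivity
    have ha2 : a^2 = γ^2 + b^2 := by
      rw [ha, Real.sq_sqrt (by positivity)]; ring
    have hba : b < a := by
      nlinarith [Real.sqrt_nonneg (γ^2 + α^2 * (κ : ℝ)^4)]
    have hnum : (↑α * (κ : ℂ)^2 - (a : ℂ)) = ((b - a : ℝ) : ℂ) := by
      push_cast [hb]; ring
    have hden : a ≤ ‖(s + (a : ℂ))‖ := by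
      calc a ≤ (s + (a : ℂ)).re := by simp [Complex.add_re]; linarith
        _ ≤ ‖(s + (a : ℂ))‖ := Complex.re_le_norm _
    rw [norm_div, div_le_one (lt_of_lt_of_le (by linarith) hden)]
    rw [hnum, Complex.norm_real, Real.norm_eq_abs]
    have habs : |b - a| = a - b := by
      rw [abs_sub_comm]; exact abs_of_nonneg (by linarith)
    rw [habs]; linarith
  refine ⟨key, ⟨1, ?_⟩⟩
  rintro x ⟨κ, s, hs, rfl⟩
  exact key κ s hs
end
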